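/- Let d ≥ 3, λ > 0, and let Ω ⊂ ℝ^d be a bounded open set. There exists a constant C > 0, depending on d, λ, Ω and the fixed Littlewood–Paley function φ, such that for every u ∈ 𝒮(ℝ^d), writing u_{ℤ∖I} = u − Σ_{k∈I} P_k u, one has ∫_{ℝ^d} (1 + |ξ|²) |(u_{ℤ∖I})^(ξ)|² dξ ≤ C ( ‖m_λ^{1/2} (P_{<I} u)^‖²_{L²} + Σ_{k>k_λ+1} ‖m_λ^{1/2} (P_k u)^‖²_{L²} ). In particular the non-critical frequency part of u is controlled in H¹(ℝ^d) by the weighted L² components of the X_λ* norm. -/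

import Mathlib

open MeasureTheory SchwartzMap
open scoped FourierTransform ENNReal NNReal

noncomputable section

/-- Euclidean space `ℝ^d`. -/
abbrev Ed (d : ℕ) := EuclideanSpace ℝ (Fin d)

/-- The fixed Littlewood–Paley function. -/
def IsLPFunction {d : ℕ} (φ : Ed d → ℝ) : Prop :=
  ContDiff ℝ (⊤ : ℕ∞) φ ∧ (∀ ξ, 0 ≤ φ ξ ∧ φ ξ ≤ 1) ∧
    Function.support φ ⊆ Metric.closedBall 0 2 ∧ ∀ ξ : Ed d, ‖ξ‖ ≤ 1 → φ ξ = 1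

/-- `ψ_k(ξ) = φ(2^{-k} ξ) − φ(2^{-k+1} ξ)`. -/
def psiLP {d : ℕ} (φ : Ed d → ℝ) (k : ℤ) (ξ : Ed d) : ℝ :=
  φ ((2:ℝ)^(-k) • ξ) - φ ((2:ℝ)^(-k+1) • ξ)

/-- The Littlewood–Paley projector `P_k`, defined via `(P_k f)^ = ψ_k f̂`. -/
def Pk {d : ℕ} (φ : Ed d → ℝ) (k : ℤ) (f : Ed d → ℂ) : Ed d → ℂ :=
  𝓕⁻ (fun ξ => (psiLP φ k ξ : ℂ) * 𝓕 f ξ)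

/-- The projector `P_{≤k}`, defined via `(P_{≤k} f)^ = φ(2^{-k}·) f̂`. -/
def PleK {d : ℕ} (φ : Ed d → ℝ) (k : ℤ) (f : Ed d → ℂ) : Ed d → ℂ :=
  𝓕⁻ (fun ξ => (φ ((2:ℝ)^(-k) • ξ) : ℂ) * 𝓕 f ξ)

/-- The squared weighted norm `‖m_λ^{1/2} ĝ‖²_{L²} = ∫ |λ − |ξ|²| |ĝ(ξ)|² dξ`. -/
def wL2sq {d : ℕ} (lam : ℝ) (g : Ed d → ℂ) : ℝ≥0∞ :=
  ∫⁻ ξ, ENNReal.ofReal |lam - ‖ξ‖ ^ 2| * (‖𝓕 g ξ‖₊ : ℝ≥0∞) ^ 2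
namespace Stmt4Aux

lemma temp_of_cpt {E : Type*} [NormedAddCommGroup E] [NormedSpace ℝ E] {f : E → ℝ}
    (hf : ContDiff ℝ (⊤ : ℕ∞) f) (h : HasCompactSupport f) : Function.HasTemperateGrowth f := by
  refine ⟨hf.of_le (by simp), fun n => ?_⟩
  obtain ⟨C, hC⟩ := (h.iteratedFDeriv n).exists_bound_of_continuous
    (hf.continuous_iteratedFDeriv (by exact_mod_cast le_top))
  exact ⟨0, C, fun x => by simpa using hC x⟩

variable {d : ℕ}

/-- `F_k(ξ) = φ(2^{-k} ξ)`. -/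
def Fk (φ : Ed d → ℝ) (k : ℤ) (ξ : Ed d) : ℝ := φ ((2:ℝ)^(-k) • ξ)

lemma psiLP_eq (φ : Ed d → ℝ) (k : ℤ) (ξ : Ed d) :
    psiLP φ k ξ = Fk φ k ξ - Fk φ (k-1) ξ := by
  have : -(k-1) = -k+1 := by ring
  rw [psiLP, Fk, Fk, this]

section phi
variable {φ : Ed d → ℝ} (hφ : IsLPFunction φ)
include hφ

lemma Fk_smooth (k : ℤ) : ContDiff ℝ (⊤ : ℕ∞) (Fk φ k) :=
  hφ.1.comp (contDiff_const_smul _)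

lemma Fk_cpt (k : ℤ) : HasCompactSupport (Fk φ k) := by
  apply HasCompactSupport.intro (isCompact_closedBall (0 : Ed d) ((2:ℝ)^(k+1)))
  intro ξ hξ
  simp only [Metric.mem_closedBall, dist_zero_right, not_le] at hξ
  have h2k : (0:ℝ) < (2:ℝ)^(-k) := by positivity
  by_contra h
  have := hφ.2.2.1 h
  simp only [Metric.mem_closedBall, dist_zero_right] at this
  rw [norm_smul, Real.norm_eq_abs, abs_of_pos h2k] at this
  have : ‖ξ‖ ≤ 2 / (2:ℝ)^(-k) := by
    rw [le_div_iff₀ h2k]; linarith [this]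
  have h2 : (2:ℝ) / (2:ℝ)^(-k) = (2:ℝ)^(k+1) := by
    rw [zpow_neg, div_inv_eq_mul, zpow_add₀ (by norm_num : (2:ℝ) ≠ 0), zpow_one]; ring
  rw [h2] at this
  linarith

lemma Fk_temp (k : ℤ) : Function.HasTemperateGrowth (Fk φ k) :=
  temp_of_cpt (Fk_smooth hφ k) (Fk_cpt hφ k)

lemma Fk_nonneg (k : ℤ) (ξ : Ed d) : 0 ≤ Fk φ k ξ := (hφ.2.1 _).1
lemma Fk_le_one (k : ℤ) (ξ : Ed d) : Fk φ k ξ ≤ 1 := (hφ.2.1 _).2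

lemma Fk_one {k : ℤ} {ξ : Ed d} (h : ‖ξ‖ ≤ (2:ℝ)^k) : Fk φ k ξ = 1 := by
  apply hφ.2.2.2
  have h2k : (0:ℝ) < (2:ℝ)^(-k) := by positivity
  rw [norm_smul, Real.norm_eq_abs, abs_of_pos h2k]
  calc (2:ℝ)^(-k) * ‖ξ‖ ≤ (2:ℝ)^(-k) * (2:ℝ)^k := by
        exact mul_le_mul_of_nonneg_left h h2k.le
    _ = 1 := by rw [← zpow_add₀ (by norm_num : (2:ℝ) ≠ 0)]; simp

lemma Fk_zero {k : ℤ} {ξ : Ed d} (h : (2:ℝ)^(k+1) < ‖ξ‖) : Fk φ k ξ = 0 := by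
  by_contra hne
  have hmem := hφ.2.2.1 hne
  simp only [Metric.mem_closedBall, dist_zero_right] at hmem
  have h2k : (0:ℝ) < (2:ℝ)^(-k) := by positivity
  rw [norm_smul, Real.norm_eq_abs, abs_of_pos h2k] at hmem
  have : ‖ξ‖ ≤ (2:ℝ)^(k+1) := by
    have := (le_div_iff₀' h2k).2 hmem
    calc ‖ξ‖ ≤ 2 / (2:ℝ)^(-k) := this
      _ = (2:ℝ)^(k+1) := by
        rw [zpow_neg, div_inv_eq_mul, zpow_add₀ (by norm_num : (2:ℝ) ≠ 0), zpow_one]; ring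
  linarith

lemma psi_nonneg (k : ℤ) (ξ : Ed d) : 0 ≤ psiLP φ k ξ := by
  rw [psiLP_eq]
  rcases eq_or_ne (Fk φ (k-1) ξ) 0 with h | h
  · rw [h]; simpa using Fk_nonneg hφ k ξ
  · have hmem := hφ.2.2.1 h
    simp only [Metric.mem_closedBall, dist_zero_right] at hmem
    have h2k : (0:ℝ) < (2:ℝ)^(-(k-1)) := by positivity
    rw [norm_smul, Real.norm_eq_abs, abs_of_pos h2k] at hmem
    have hξ : ‖ξ‖ ≤ (2:ℝ)^k := by
      have := (le_div_iff₀' h2k).2 hmem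
      calc ‖ξ‖ ≤ 2 / (2:ℝ)^(-(k-1)) := this
        _ = (2:ℝ)^k := by
          rw [zpow_neg, div_inv_eq_mul]
          rw [show k = (k-1) + 1 by ring, zpow_add₀ (by norm_num : (2:ℝ) ≠ 0), zpow_one]; ring
    rw [Fk_one hφ hξ]
    linarith [Fk_le_one hφ (k-1) ξ]

lemma psi_le_one (k : ℤ) (ξ : Ed d) : psiLP φ k ξ ≤ 1 := by
  rw [psiLP_eq]
  linarith [Fk_le_one hφ k ξ, Fk_nonneg hφ (k-1) ξ]

end phi

/-- Multiplication by a temperate-growth real function, as a CLM on Schwartz space. -/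
def mulS {g : Ed d → ℝ} (hg : g.HasTemperateGrowth) :
    SchwartzMap (Ed d) ℂ →L[ℝ] SchwartzMap (Ed d) ℂ :=
  bilinLeftCLM ((ContinuousLinearMap.lsmul ℝ ℝ : ℝ →L[ℝ] ℂ →L[ℝ] ℂ).flip) hg

lemma mulS_apply {g : Ed d → ℝ} (hg : g.HasTemperateGrowth) (f : SchwartzMap (Ed d) ℂ)
    (x : Ed d) : mulS hg f x = (g x : ℂ) * f x := by
  simp [mulS, bilinLeftCLM]; rfl

section phi2
variable {φ : Ed d → ℝ} (hφ : IsLPFunction φ)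
include hφ

lemma psi_temp (k : ℤ) : Function.HasTemperateGrowth (psiLP φ k) := by
  have he : psiLP φ k = fun ξ => Fk φ k ξ - Fk φ (k-1) ξ := funext (psiLP_eq φ k)
  rw [he]
  refine temp_of_cpt ((Fk_smooth hφ k).sub (Fk_smooth hφ (k-1))) ?_
  apply HasCompactSupport.intro (isCompact_closedBall (0 : Ed d) ((2:ℝ)^(k+1)))
  intro ξ hξ
  simp only [Metric.mem_closedBall, dist_zero_right, not_le] at hξ
  have h1 : (2:ℝ)^((k-1)+1) < ‖ξ‖ := by
    refine lt_of_le_of_lt ?_ hξ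
    apply zpow_le_zpow_right₀ one_le_two; omega
  rw [Fk_zero hφ hξ, Fk_zero hφ h1, sub_zero]

/-- `P_k u` as a Schwartz map. -/
def PkS (k : ℤ) (u : SchwartzMap (Ed d) ℂ) : SchwartzMap (Ed d) ℂ :=
  (fourierTransformCLE ℝ (𝓢(Ed d, ℂ))).symm (mulS (psi_temp hφ k) (fourierTransformCLE ℝ (𝓢(Ed d, ℂ)) u))

lemma Pk_coe (k : ℤ) (u : SchwartzMap (Ed d) ℂ) : Pk φ k ⇑u = ⇑(PkS hφ k u) := by
  rw [Pk]
  have hcoe : (fun η => (psiLP φ k η : ℂ) * 𝓕 (⇑u) η)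
      = ⇑(mulS (psi_temp hφ k) (fourierTransformCLE ℝ (𝓢(Ed d, ℂ)) u)) :=
    funext fun η => (mulS_apply (psi_temp hφ k) (fourierTransformCLE ℝ (𝓢(Ed d, ℂ)) u) η).symm
  rw [hcoe, PkS]; exact (SchwartzMap.fourierInv_coe _).symm

lemma fourier_PkS (k : ℤ) (u : SchwartzMap (Ed d) ℂ) :
    𝓕 ⇑(PkS hφ k u) = fun ξ => (psiLP φ k ξ : ℂ) * 𝓕 (⇑u) ξ := by
  have h1 : 𝓕 ⇑(PkS hφ k u)
      = ⇑(fourierTransformCLE ℝ (𝓢(Ed d, ℂ)) (PkS hφ k u)) := rfl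
  rw [h1, PkS, ContinuousLinearEquiv.apply_symm_apply]
  exact funext fun ξ => mulS_apply (psi_temp hφ k) _ ξ

/-- `P_{≤k} u` as a Schwartz map. -/
def PleKS (k : ℤ) (u : SchwartzMap (Ed d) ℂ) : SchwartzMap (Ed d) ℂ :=
  (fourierTransformCLE ℝ (𝓢(Ed d, ℂ))).symm (mulS (Fk_temp hφ k) (fourierTransformCLE ℝ (𝓢(Ed d, ℂ)) u))

lemma PleK_coe (k : ℤ) (u : SchwartzMap (Ed d) ℂ) : PleK φ k ⇑u = ⇑(PleKS hφ k u) := by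
  rw [PleK]
  have hcoe : (fun η => (φ ((2:ℝ)^(-k) • η) : ℂ) * 𝓕 (⇑u) η)
      = ⇑(mulS (Fk_temp hφ k) (fourierTransformCLE ℝ (𝓢(Ed d, ℂ)) u)) :=
    funext fun η => (mulS_apply (Fk_temp hφ k) (fourierTransformCLE ℝ (𝓢(Ed d, ℂ)) u) η).symm
  rw [hcoe, PleKS]; exact (SchwartzMap.fourierInv_coe _).symm

lemma fourier_PleKS (k : ℤ) (u : SchwartzMap (Ed d) ℂ) :
    𝓕 ⇑(PleKS hφ k u) = fun ξ => (Fk φ k ξ : ℂ) * 𝓕 (⇑u) ξ := by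
  have h1 : 𝓕 ⇑(PleKS hφ k u)
      = ⇑(fourierTransformCLE ℝ (𝓢(Ed d, ℂ)) (PleKS hφ k u)) := rfl
  rw [h1, PleKS, ContinuousLinearEquiv.apply_symm_apply]
  exact funext fun ξ => mulS_apply (Fk_temp hφ k) _ ξ

end phi2

lemma tz_le {a b : ℤ} (h : a ≤ b) : (2:ℝ)^a ≤ (2:ℝ)^b := zpow_le_zpow_right₀ one_le_two h
lemma tz_lt {a b : ℤ} (h : a < b) : (2:ℝ)^a < (2:ℝ)^b := zpow_lt_zpow_right₀ one_lt_two h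
lemma tz_pos (a : ℤ) : (0:ℝ) < (2:ℝ)^a := by positivity

lemma enn_sq (a : ℝ) : ((‖a‖₊ : ℝ≥0∞))^2 = ENNReal.ofReal (a^2) := by
  rw [show ((‖a‖₊ : ℝ≥0∞)) = ‖a‖ₑ from rfl, Real.enorm_eq_ofReal_abs, ← ENNReal.ofReal_pow (abs_nonneg a), sq_abs]

/-- The constant. -/
def Cst (lam : ℝ) (klam : ℤ) : ℝ :=
  max ((1 + ((2:ℝ)^(klam-2))^2)/(lam - ((2:ℝ)^(klam-2))^2)) (2*((4*lam+1)/(3*lam)))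

lemma sum_psi (φ : Ed d → ℝ) (klam : ℤ) (ξ : Ed d) :
    ∑ k ∈ Finset.Icc (klam-2) (klam+1), psiLP φ k ξ
      = Fk φ (klam+1) ξ - Fk φ (klam-3) ξ := by
  have h : Finset.Icc (klam-2) (klam+1) = {klam-2, klam-1, klam, klam+1} := by
    ext x; simp [Finset.mem_Icc, Finset.mem_insert]; omega
  rw [h, Finset.sum_insert (by simp only [Finset.mem_insert, Finset.mem_singleton]; omega),
    Finset.sum_insert (by simp only [Finset.mem_insert, Finset.mem_singleton]; omega),
    Finset.sum_insert (by simp only [Finset.mem_singleton]; omega), Finset.sum_singleton]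
  simp only [psiLP_eq]
  rw [show klam-2-1 = klam-3 by ring, show klam-1-1 = klam-2 by ring,
    show klam+1-1 = klam by ring]
  ring

section pw
variable {φ : Ed d → ℝ} (hφ : IsLPFunction φ) {lam : ℝ} (hlam : 0 < lam)
  {klam : ℤ} (hklam₁ : (2:ℝ) ^ (klam - 1) < Real.sqrt lam)
  (hklam₂ : Real.sqrt lam ≤ (2:ℝ) ^ klam)
include hφ hlam hklam₁ hklam₂

set_option maxHeartbeats 1000000 in
lemma pointwise (ξ : Ed d) :
    ENNReal.ofReal (1 + ‖ξ‖^2)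
        * ((‖1 - ∑ k ∈ Finset.Icc (klam-2) (klam+1), psiLP φ k ξ‖₊ : ℝ≥0∞))^2
      ≤ ENNReal.ofReal (Cst lam klam) * (ENNReal.ofReal |lam - ‖ξ‖^2| *
          ((‖Fk φ (klam-3) ξ‖₊ : ℝ≥0∞)^2
            + ∑' n : ℕ, (‖psiLP φ (klam+2+(n:ℤ)) ξ‖₊ : ℝ≥0∞)^2)) := by
  set s := ‖ξ‖ with hs_def
  have hs : 0 ≤ s := norm_nonneg ξ
  set q : ℝ := ((2:ℝ)^(klam-2))^2 with hq_def
  have hq : q < lam := by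
    have h1 : (2:ℝ)^(klam-2) < Real.sqrt lam :=
      lt_of_le_of_lt (tz_le (by omega)) hklam₁
    have := Real.sq_sqrt hlam.le
    nlinarith [tz_pos (klam-2), Real.sqrt_nonneg lam]
  set Clow : ℝ := (1 + q)/(lam - q) with hClow_def
  set Chigh : ℝ := (4*lam+1)/(3*lam) with hChigh_def
  have hq0 : 0 < q := by positivity
  have hClow_pos : 0 < Clow := by
    apply div_pos <;> nlinarith
  have hChigh_pos : 0 < Chigh := by
    apply div_pos <;> nlinarith
  have hCeq : Cst lam klam = max Clow (2*Chigh) := rfl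
  have hClowC : Clow ≤ Cst lam klam := by rw [hCeq]; exact le_max_left _ _
  have hChighC : Chigh ≤ Cst lam klam := by
    rw [hCeq]; exact le_trans (by linarith) (le_max_right _ _)
  have h2ChighC : 2*Chigh ≤ Cst lam klam := by rw [hCeq]; exact le_max_right _ _
  have hC0 : 0 ≤ Cst lam klam := le_trans hClow_pos.le hClowC
  have hhigh : ∀ t : ℝ, (2:ℝ)^(klam+1) < t → 1 + t^2 ≤ Chigh * (t^2 - lam) ∧ 4*lam ≤ t^2 := by
    intro t ht
    have h2k1 : Real.sqrt lam * 2 ≤ (2:ℝ)^(klam+1) := by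
      rw [zpow_add₀ (by norm_num : (2:ℝ) ≠ 0), zpow_one]
      nlinarith [tz_pos klam]
    have h4 : 4*lam ≤ t^2 := by
      have := Real.sq_sqrt hlam.le
      nlinarith [Real.sqrt_nonneg lam]
    refine ⟨?_, h4⟩
    rw [hChigh_def, div_mul_eq_mul_div, le_div_iff₀ (by linarith)]
    nlinarith
  -- abbreviations for the goal pieces
  rw [sum_psi φ klam ξ]
  set A : ℝ := 1 - (Fk φ (klam+1) ξ - Fk φ (klam-3) ξ) with hA_def
  set S : ℝ≥0∞ := ∑' n : ℕ, (‖psiLP φ (klam+2+(n:ℤ)) ξ‖₊ : ℝ≥0∞)^2 with hS_def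
  rcases le_or_gt s ((2:ℝ)^(klam-2)) with h1 | h1
  · -- Region 1 : low frequencies
    have hF1 : Fk φ (klam+1) ξ = 1 := Fk_one hφ (h1.trans (tz_le (by omega)))
    have hA : A = Fk φ (klam-3) ξ := by rw [hA_def, hF1]; ring
    have hs2q : s^2 ≤ q := by
      rw [hq_def]; exact pow_le_pow_left₀ hs h1 2
    have habs : |lam - s^2| = lam - s^2 := abs_of_pos (by linarith)
    have key : 1 + s^2 ≤ Clow * (lam - s^2) := by
      rw [hClow_def, div_mul_eq_mul_div, le_div_iff₀ (by linarith)]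
      nlinarith
    have hF3nn : (0:ℝ) ≤ Fk φ (klam-3) ξ := Fk_nonneg hφ _ ξ
    calc ENNReal.ofReal (1 + s^2) * ((‖A‖₊ : ℝ≥0∞))^2
        = ENNReal.ofReal ((1 + s^2) * A^2) := by
          rw [enn_sq, ← ENNReal.ofReal_mul (by positivity)]
      _ ≤ ENNReal.ofReal (Cst lam klam * ((lam - s^2) * (Fk φ (klam-3) ξ)^2)) := by
          apply ENNReal.ofReal_le_ofReal
          rw [hA]
          calc (1 + s^2) * (Fk φ (klam-3) ξ)^2
              ≤ (Clow * (lam - s^2)) * (Fk φ (klam-3) ξ)^2 :=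
                mul_le_mul_of_nonneg_right key (sq_nonneg _)
            _ = Clow * ((lam - s^2) * (Fk φ (klam-3) ξ)^2) := by ring
            _ ≤ Cst lam klam * ((lam - s^2) * (Fk φ (klam-3) ξ)^2) :=
                mul_le_mul_of_nonneg_right hClowC
                  (mul_nonneg (by linarith) (sq_nonneg _))
      _ = ENNReal.ofReal (Cst lam klam) * (ENNReal.ofReal (lam - s^2)
            * ENNReal.ofReal ((Fk φ (klam-3) ξ)^2)) := by
          rw [ENNReal.ofReal_mul hC0, ENNReal.ofReal_mul (by linarith)]
      _ ≤ ENNReal.ofReal (Cst lam klam) * (ENNReal.ofReal |lam - s^2|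
            * ((‖Fk φ (klam-3) ξ‖₊ : ℝ≥0∞)^2 + S)) := by
          rw [habs, enn_sq]
          gcongr
          exact le_self_add
  rcases le_or_gt s ((2:ℝ)^(klam+1)) with h2 | h2
  · -- Region 2 : annulus, A = 0
    have hF1 : Fk φ (klam+1) ξ = 1 := Fk_one hφ h2
    have hF3 : Fk φ (klam-3) ξ = 0 :=
      Fk_zero hφ (by rw [show klam-3+1 = klam-2 by ring]; exact h1)
    have hA : A = 0 := by rw [hA_def, hF1, hF3]; ring
    rw [hA]
    simp
  rcases le_or_gt s ((2:ℝ)^(klam+2)) with h3 | h3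
  · -- Region 3 : first high shell
    have hF3 : Fk φ (klam-3) ξ = 0 :=
      Fk_zero hφ (by rw [show klam-3+1 = klam-2 by ring]; exact lt_trans (tz_lt (by omega)) h2)
    have hA : A = psiLP φ (klam+2) ξ := by
      rw [hA_def, hF3, psiLP_eq, show klam+2-1 = klam+1 by ring, Fk_one hφ h3]
      ring
    obtain ⟨key, h4⟩ := hhigh s h2
    have habs : |lam - s^2| = s^2 - lam := by
      rw [abs_sub_comm]; exact abs_of_nonneg (by linarith)
    have hterm : ENNReal.ofReal ((psiLP φ (klam+2) ξ)^2) ≤ S := by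
      calc ENNReal.ofReal ((psiLP φ (klam+2) ξ)^2)
          = ((‖psiLP φ (klam+2+((0:ℕ):ℤ)) ξ‖₊ : ℝ≥0∞))^2 := by rw [enn_sq]; norm_num
        _ ≤ S := by rw [hS_def]; exact ENNReal.le_tsum 0
    calc ENNReal.ofReal (1 + s^2) * ((‖A‖₊ : ℝ≥0∞))^2
        = ENNReal.ofReal ((1 + s^2) * (psiLP φ (klam+2) ξ)^2) := by
          rw [enn_sq, hA, ← ENNReal.ofReal_mul (by positivity)]
      _ ≤ ENNReal.ofReal (Cst lam klam * ((s^2 - lam) * (psiLP φ (klam+2) ξ)^2)) := by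
          apply ENNReal.ofReal_le_ofReal
          calc (1 + s^2) * (psiLP φ (klam+2) ξ)^2
              ≤ (Chigh * (s^2 - lam)) * (psiLP φ (klam+2) ξ)^2 :=
                mul_le_mul_of_nonneg_right key (sq_nonneg _)
            _ = Chigh * ((s^2 - lam) * (psiLP φ (klam+2) ξ)^2) := by ring
            _ ≤ Cst lam klam * ((s^2 - lam) * (psiLP φ (klam+2) ξ)^2) :=
                mul_le_mul_of_nonneg_right hChighC
                  (mul_nonneg (by nlinarith) (sq_nonneg _))
      _ = ENNReal.ofReal (Cst lam klam) * (ENNReal.ofReal (s^2 - lam)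
            * ENNReal.ofReal ((psiLP φ (klam+2) ξ)^2)) := by
          rw [ENNReal.ofReal_mul hC0, ENNReal.ofReal_mul (by linarith)]
      _ ≤ ENNReal.ofReal (Cst lam klam) * (ENNReal.ofReal |lam - s^2|
            * ((‖Fk φ (klam-3) ξ‖₊ : ℝ≥0∞)^2 + S)) := by
          rw [habs]
          gcongr
          exact le_trans hterm le_add_self
  · -- Region 4 : high frequencies
    have hF3 : Fk φ (klam-3) ξ = 0 :=
      Fk_zero hφ (by rw [show klam-3+1 = klam-2 by ring]; exact lt_trans (tz_lt (by omega)) h3)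
    have hF1 : Fk φ (klam+1) ξ = 0 :=
      Fk_zero hφ (by rw [show klam+1+1 = klam+2 by ring]; exact h3)
    have hA : A = 1 := by rw [hA_def, hF1, hF3]; ring
    obtain ⟨key, h4⟩ := hhigh s (lt_trans (tz_lt (by omega)) h3)
    have habs : |lam - s^2| = s^2 - lam := by
      rw [abs_sub_comm]; exact abs_of_nonneg (by linarith)
    have hspos : 0 < s := lt_trans (tz_pos _) h3
    obtain ⟨m, hm⟩ := exists_mem_Ioc_zpow hspos one_lt_two
    have hmk : klam + 2 ≤ m := by
      by_contra hcon
      push_neg at hcon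
      have : (2:ℝ)^(m+1) ≤ (2:ℝ)^(klam+2) := tz_le (by omega)
      have := hm.2
      linarith
    have hx := psi_nonneg hφ m ξ
    have hy := psi_nonneg hφ (m+1) ξ
    have hFm1 : Fk φ (m-1) ξ = 0 :=
      Fk_zero hφ (by rw [show m-1+1 = m by ring]; exact hm.1)
    have hFm2 : Fk φ (m+1) ξ = 1 := Fk_one hφ hm.2
    have hsum2 : psiLP φ m ξ + psiLP φ (m+1) ξ = 1 := by
      rw [psiLP_eq, psiLP_eq, show m+1-1 = m by ring, hFm2, hFm1]
      ring
    have hhalf : (1:ℝ)/2 ≤ (psiLP φ m ξ)^2 + (psiLP φ (m+1) ξ)^2 := by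
      nlinarith [sq_nonneg (psiLP φ m ξ - psiLP φ (m+1) ξ), hsum2]
    set n₁ : ℕ := (m - (klam+2)).toNat with hn1_def
    have hcast : ((n₁ : ℤ)) = m - (klam+2) := Int.toNat_of_nonneg (by omega)
    have hidx1 : klam+2+((n₁:ℕ):ℤ) = m := by omega
    have hidx2 : klam+2+(((n₁+1 :ℕ)):ℤ) = m+1 := by push_cast; omega
    have hStsum : ENNReal.ofReal ((psiLP φ m ξ)^2 + (psiLP φ (m+1) ξ)^2) ≤ S := by
      rw [ENNReal.ofReal_add (by positivity) (by positivity)]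
      have hfin := ENNReal.sum_le_tsum (s := ({n₁, n₁+1} : Finset ℕ))
        (f := fun n : ℕ => (‖psiLP φ (klam+2+(n:ℤ)) ξ‖₊ : ℝ≥0∞)^2)
      rw [Finset.sum_pair (by omega : n₁ ≠ n₁+1)] at hfin
      rw [hidx1, hidx2, enn_sq, enn_sq] at hfin
      exact hfin
    have hhalfS : ENNReal.ofReal (1/2 : ℝ) ≤ S :=
      le_trans (ENNReal.ofReal_le_ofReal hhalf) hStsum
    calc ENNReal.ofReal (1 + s^2) * ((‖A‖₊ : ℝ≥0∞))^2
        = ENNReal.ofReal (1 + s^2) := by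
          rw [enn_sq, hA]; norm_num
      _ ≤ ENNReal.ofReal ((2*Chigh) * ((s^2 - lam) * (1/2))) := by
          apply ENNReal.ofReal_le_ofReal; nlinarith
      _ = ENNReal.ofReal (2*Chigh) * (ENNReal.ofReal (s^2 - lam)
            * ENNReal.ofReal (1/2 : ℝ)) := by
          rw [ENNReal.ofReal_mul (p := 2*Chigh) (by positivity),
            ENNReal.ofReal_mul (p := s^2 - lam) (by linarith)]
      _ ≤ ENNReal.ofReal (Cst lam klam) * (ENNReal.ofReal |lam - s^2|
            * ((‖Fk φ (klam-3) ξ‖₊ : ℝ≥0∞)^2 + S)) := by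
          rw [habs]
          exact mul_le_mul' (ENNReal.ofReal_le_ofReal h2ChighC)
            (mul_le_mul' le_rfl (le_trans hhalfS le_add_self))

end pw

lemma nn_real (r : ℝ) : ‖(r:ℂ)‖₊ = ‖r‖₊ := by
  ext; simp [coe_nnnorm, Complex.norm_real]

end Stmt4Aux

open Stmt4Aux in
set_option maxHeartbeats 2000000 in
theorem statement4' (d : ℕ) (hd : 3 ≤ d) (lam : ℝ) (hlam : 0 < lam)
    (Ω : Set (Ed d)) (hΩopen : IsOpen Ω) (hΩbdd : Bornology.IsBounded Ω)
    (φ : Ed d → ℝ) (hφ : IsLPFunction φ)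
    (klam : ℤ) (hklam₁ : (2:ℝ) ^ (klam - 1) < Real.sqrt lam)
    (hklam₂ : Real.sqrt lam ≤ (2:ℝ) ^ klam) :
    ∃ C : ℝ, 0 < C ∧
      ∀ u : SchwartzMap (Ed d) ℂ,
        (∫⁻ ξ, ENNReal.ofReal (1 + ‖ξ‖ ^ 2) *
            (‖𝓕 (fun x => u x - ∑ k ∈ Finset.Icc (klam - 2) (klam + 1), Pk φ k (⇑u) x) ξ‖₊
              : ℝ≥0∞) ^ 2)
          ≤ ENNReal.ofReal C *
              (wL2sq lam (PleK φ (klam - 3) ⇑u)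
                + ∑' n : ℕ, wL2sq lam (Pk φ (klam + 2 + (n : ℤ)) ⇑u)) := by
  have hq : ((2:ℝ)^(klam-2))^2 < lam := by
    have h1 : (2:ℝ)^(klam-2) < Real.sqrt lam :=
      lt_of_le_of_lt (tz_le (by omega)) hklam₁
    have := Real.sq_sqrt hlam.le
    nlinarith [tz_pos (klam-2), Real.sqrt_nonneg lam]
  have hCpos : 0 < Cst lam klam := by
    have h2 : (0:ℝ) < 2*((4*lam+1)/(3*lam)) := by positivity
    exact lt_of_lt_of_le h2 (le_max_right _ _)
  refine ⟨Cst lam klam, hCpos, fun u => ?_⟩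
  set FT := fourierTransformCLE ℝ (𝓢(Ed d, ℂ)) with hFT_def
  have hcont𝓕u : Continuous (𝓕 ⇑u) := (FT u).continuous
  -- rewrite the remainder as a Schwartz function and compute its Fourier transform
  have hrem : (fun x => u x - ∑ k ∈ Finset.Icc (klam - 2) (klam + 1), Pk φ k (⇑u) x)
      = ⇑(u - ∑ k ∈ Finset.Icc (klam - 2) (klam + 1), PkS hφ k u) := by
    funext x
    rw [SchwartzMap.sub_apply]
    congr 1
    rw [← SchwartzMap.coe_coeHom, map_sum, Finset.sum_apply]
    exact Finset.sum_congr rfl fun k _ => congrFun (Pk_coe hφ k u) x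
  have hFrem : 𝓕 (fun x => u x - ∑ k ∈ Finset.Icc (klam - 2) (klam + 1), Pk φ k (⇑u) x)
      = fun ξ => (((1 - ∑ k ∈ Finset.Icc (klam - 2) (klam + 1), psiLP φ k ξ : ℝ)) : ℂ)
          * 𝓕 (⇑u) ξ := by
    rw [hrem]
    have h1 : 𝓕 ⇑(u - ∑ k ∈ Finset.Icc (klam - 2) (klam + 1), PkS hφ k u)
        = ⇑(FT (u - ∑ k ∈ Finset.Icc (klam - 2) (klam + 1), PkS hφ k u)) := rfl
    rw [h1, map_sub, map_sum]
    funext ξ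
    rw [SchwartzMap.sub_apply]
    have h2 : (∑ k ∈ Finset.Icc (klam - 2) (klam + 1), FT (PkS hφ k u)) ξ
        = ∑ k ∈ Finset.Icc (klam - 2) (klam + 1), (psiLP φ k ξ : ℂ) * 𝓕 (⇑u) ξ := by
      rw [← SchwartzMap.coe_coeHom, map_sum, Finset.sum_apply]
      refine Finset.sum_congr rfl fun k _ => ?_
      have : FT (PkS hφ k u) = mulS (psi_temp hφ k) (FT u) := by
        rw [PkS, hFT_def, ContinuousLinearEquiv.apply_symm_apply]
      rw [SchwartzMap.coe_coeHom, this]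
      exact mulS_apply (psi_temp hφ k) (FT u) ξ
    rw [h2, ← Finset.sum_mul]
    have h3 : (FT u) ξ = 𝓕 (⇑u) ξ := rfl
    rw [h3]
    push_cast
    ring
  -- measurability helper
  have hmeas : ∀ g : Ed d → ℝ, Continuous g →
      Measurable (fun ξ : Ed d => ENNReal.ofReal |lam - ‖ξ‖^2|
        * ((‖g ξ‖₊ : ℝ≥0∞)^2 * (‖𝓕 (⇑u) ξ‖₊ : ℝ≥0∞)^2)) := by
    intro g hg
    refine (?_ : Measurable (fun ξ : Ed d => ENNReal.ofReal |lam - ‖ξ‖^2|)).mul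
      ((?_ : Measurable (fun ξ : Ed d => (‖g ξ‖₊ : ℝ≥0∞)^2)).mul ?_)
    · exact (ENNReal.continuous_ofReal.comp
        ((continuous_const.sub (continuous_norm.pow 2)).abs)).measurable
    · exact (measurable_coe_nnreal_ennreal.comp hg.measurable.nnnorm).pow_const 2
    · exact (measurable_coe_nnreal_ennreal.comp hcont𝓕u.measurable.nnnorm).pow_const 2
  have hcont_psi : ∀ k : ℤ, Continuous (psiLP φ k) := by
    intro k
    have : psiLP φ k = fun ξ => Fk φ k ξ - Fk φ (k-1) ξ := funext (psiLP_eq φ k)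
    rw [this]
    exact ((Fk_smooth hφ k).continuous).sub ((Fk_smooth hφ (k-1)).continuous)
  -- rewrite the weighted norms
  have hwle : wL2sq lam (PleK φ (klam - 3) ⇑u)
      = ∫⁻ ξ, ENNReal.ofReal |lam - ‖ξ‖^2|
          * ((‖Fk φ (klam-3) ξ‖₊ : ℝ≥0∞)^2 * (‖𝓕 (⇑u) ξ‖₊ : ℝ≥0∞)^2) := by
    rw [wL2sq, PleK_coe hφ (klam-3) u]
    refine lintegral_congr fun ξ => ?_
    rw [fourier_PleKS hφ (klam-3) u]
    simp only [nnnorm_mul, nn_real, ENNReal.coe_mul, mul_pow]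
  have hwpk : ∀ k : ℤ, wL2sq lam (Pk φ k ⇑u)
      = ∫⁻ ξ, ENNReal.ofReal |lam - ‖ξ‖^2|
          * ((‖psiLP φ k ξ‖₊ : ℝ≥0∞)^2 * (‖𝓕 (⇑u) ξ‖₊ : ℝ≥0∞)^2) := by
    intro k
    rw [wL2sq, Pk_coe hφ k u]
    refine lintegral_congr fun ξ => ?_
    rw [fourier_PkS hφ k u]
    simp only [nnnorm_mul, nn_real, ENNReal.coe_mul, mul_pow]
  -- sum the high-frequency pieces
  have htsum : ∑' n : ℕ, wL2sq lam (Pk φ (klam + 2 + (n : ℤ)) ⇑u)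
      = ∫⁻ ξ, ENNReal.ofReal |lam - ‖ξ‖^2|
          * ((∑' n : ℕ, (‖psiLP φ (klam + 2 + (n:ℤ)) ξ‖₊ : ℝ≥0∞)^2)
              * (‖𝓕 (⇑u) ξ‖₊ : ℝ≥0∞)^2) := by
    calc ∑' n : ℕ, wL2sq lam (Pk φ (klam + 2 + (n : ℤ)) ⇑u)
        = ∑' n : ℕ, ∫⁻ ξ, ENNReal.ofReal |lam - ‖ξ‖^2|
            * ((‖psiLP φ (klam + 2 + (n:ℤ)) ξ‖₊ : ℝ≥0∞)^2 * (‖𝓕 (⇑u) ξ‖₊ : ℝ≥0∞)^2) := by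
          exact tsum_congr fun n => hwpk (klam + 2 + (n:ℤ))
      _ = ∫⁻ ξ, ∑' n : ℕ, ENNReal.ofReal |lam - ‖ξ‖^2|
            * ((‖psiLP φ (klam + 2 + (n:ℤ)) ξ‖₊ : ℝ≥0∞)^2 * (‖𝓕 (⇑u) ξ‖₊ : ℝ≥0∞)^2) :=
          (lintegral_tsum fun n => (hmeas _ (hcont_psi _)).aemeasurable).symm
      _ = _ := by
          refine lintegral_congr fun ξ => ?_
          rw [ENNReal.tsum_mul_left, ENNReal.tsum_mul_right]
  -- put the right-hand side together
  rw [hwle, htsum, ← lintegral_add_left (hmeas _ ((Fk_smooth hφ (klam-3)).continuous))]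
  rw [← lintegral_const_mul' _ _ ENNReal.ofReal_ne_top]
  rw [hFrem]
  apply lintegral_mono
  intro ξ
  calc ENNReal.ofReal (1 + ‖ξ‖ ^ 2)
        * ((‖(((1 - ∑ k ∈ Finset.Icc (klam - 2) (klam + 1), psiLP φ k ξ : ℝ)) : ℂ)
            * 𝓕 (⇑u) ξ‖₊ : ℝ≥0∞))^2
      = (ENNReal.ofReal (1 + ‖ξ‖ ^ 2)
          * ((‖(1 - ∑ k ∈ Finset.Icc (klam - 2) (klam + 1), psiLP φ k ξ : ℝ)‖₊ : ℝ≥0∞))^2)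
          * ((‖𝓕 (⇑u) ξ‖₊ : ℝ≥0∞))^2 := by
        rw [nnnorm_mul, nn_real, ENNReal.coe_mul, mul_pow]; ring
    _ ≤ (ENNReal.ofReal (Cst lam klam) * (ENNReal.ofReal |lam - ‖ξ‖^2| *
          ((‖Fk φ (klam-3) ξ‖₊ : ℝ≥0∞)^2
            + ∑' n : ℕ, (‖psiLP φ (klam+2+(n:ℤ)) ξ‖₊ : ℝ≥0∞)^2)))
          * ((‖𝓕 (⇑u) ξ‖₊ : ℝ≥0∞))^2 :=
        mul_le_mul_left (pointwise hφ hlam hklam₁ hklam₂ ξ) _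
    _ = ENNReal.ofReal (Cst lam klam)
          * (ENNReal.ofReal |lam - ‖ξ‖^2|
              * ((‖Fk φ (klam-3) ξ‖₊ : ℝ≥0∞)^2 * (‖𝓕 (⇑u) ξ‖₊ : ℝ≥0∞)^2)
            + ENNReal.ofReal |lam - ‖ξ‖^2|
              * ((∑' n : ℕ, (‖psiLP φ (klam+2+(n:ℤ)) ξ‖₊ : ℝ≥0∞)^2)
                  * (‖𝓕 (⇑u) ξ‖₊ : ℝ≥0∞)^2)) := by
        ring


/-- for `d ≥ 3`, `λ > 0` and bounded open `Ω`, there is `C > 0` such that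
for every Schwartz `u`, writing `u_{ℤ∖I} = u − Σ_{k∈I} P_k u`,
`∫ (1+|ξ|²) |(u_{ℤ∖I})^(ξ)|² dξ ≤ C (‖m_λ^{1/2}(P_{<I}u)^‖²_{L²} + Σ_{k>k_λ+1} ‖m_λ^{1/2}(P_k u)^‖²_{L²})`,
i.e. the non-critical frequency part of `u` is controlled in `H¹(ℝ^d)` by the weighted `L²`
components of the `X_λ^*` norm. -/
theorem statement4 (d : ℕ) (hd : 3 ≤ d) (lam : ℝ) (hlam : 0 < lam)
    (Ω : Set (Ed d)) (hΩopen : IsOpen Ω) (hΩbdd : Bornology.IsBounded Ω)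
    (φ : Ed d → ℝ) (hφ : IsLPFunction φ)
    (klam : ℤ) (hklam₁ : (2:ℝ) ^ (klam - 1) < Real.sqrt lam)
    (hklam₂ : Real.sqrt lam ≤ (2:ℝ) ^ klam) :
    ∃ C : ℝ, 0 < C ∧
      ∀ u : SchwartzMap (Ed d) ℂ,
        (∫⁻ ξ, ENNReal.ofReal (1 + ‖ξ‖ ^ 2) *
            (‖𝓕 (fun x => u x - ∑ k ∈ Finset.Icc (klam - 2) (klam + 1), Pk φ k (⇑u) x) ξ‖₊
              : ℝ≥0∞) ^ 2)
          ≤ ENNReal.ofReal C *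
              (wL2sq lam (PleK φ (klam - 3) ⇑u)
                + ∑' n : ℕ, wL2sq lam (Pk φ (klam + 2 + (n : ℤ)) ⇑u)) := by
  exact statement4' d hd lam hlam Ω hΩopen hΩbdd φ hφ klam hklam₁ hklam₂
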